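/- arXiv:2110.10308 — 6 statements merged into one kernel-verified Lean document; each statement's English description precedes it below -/
import Mathlib

section
/- Let V be a real vector space, Ω ⊆ V a nonempty set closed under positive scalar multiplication (c • v ∈ Ω whenever v ∈ Ω and c > 0), and F : V → ℝ a function with F(v) > 0 for all v ∈ Ω and F(c • v) = c · F(v) for all v ∈ Ω and c > 0. Let ω : V → ℝ be a linear functional with ω(u) < 0 for every u ∈ Ω. Define L(v) := −F(v)²/2 for v ∈ Ω and L*(ω) := −(1/2) · (sSup {ω(u) | u ∈ Ω ∧ F(u) = 1})². Then the reverse Cauchy–Schwarz inequality L*(ω) · L(v) ≤ (1/4) · (ω(v))² holds for every v ∈ Ω. -/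
/-- Reverse Cauchy–Schwarz inequality for a Lorentz–Finsler cone:
if `Ω` is a nonempty cone, `F` is positive and positively 1-homogeneous on `Ω`,
`ω` is a linear functional negative on `Ω`, `L v = -F(v)²/2` on `Ω`, and
`L* = -(1/2)(sSup {ω u | u ∈ Ω, F u = 1})²`, then
`L* · L v ≤ (1/4)(ω v)²` for all `v ∈ Ω`. -/
theorem reverse_cauchy_schwarz
    {V : Type*} [AddCommGroup V] [Module ℝ V]
    (Ω : Set V) (hne : Ω.Nonempty)
    (hcone : ∀ v ∈ Ω, ∀ c : ℝ, 0 < c → c • v ∈ Ω)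
    (F : V → ℝ)
    (hFpos : ∀ v ∈ Ω, 0 < F v)
    (hFhom : ∀ v ∈ Ω, ∀ c : ℝ, 0 < c → F (c • v) = c * F v)
    (ω : V →ₗ[ℝ] ℝ)
    (hω : ∀ u ∈ Ω, ω u < 0)
    (L : V → ℝ) (hL : ∀ v ∈ Ω, L v = -(F v) ^ 2 / 2)
    (Lstar : ℝ)
    (hLstar : Lstar = -(1 / 2) * (sSup {x : ℝ | ∃ u ∈ Ω, F u = 1 ∧ ω u = x}) ^ 2) :
    ∀ v ∈ Ω, Lstar * L v ≤ (1 / 4) * (ω v) ^ 2 := by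
  intro v hv
  set S := sSup {x : ℝ | ∃ u ∈ Ω, F u = 1 ∧ ω u = x} with hS
  have hbdd : BddAbove {x : ℝ | ∃ u ∈ Ω, F u = 1 ∧ ω u = x} := by
    refine ⟨0, ?_⟩
    rintro x ⟨u, hu, -, rfl⟩
    exact (hω u hu).le
  -- the normalized vector
  have hFv := hFpos v hv
  have hc : (0:ℝ) < (F v)⁻¹ := inv_pos.mpr hFv
  have hu : (F v)⁻¹ • v ∈ Ω := hcone v hv _ hc
  have hFu : F ((F v)⁻¹ • v) = 1 := by
    rw [hFhom v hv _ hc, inv_mul_cancel₀ hFv.ne']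
  have hmem : ω ((F v)⁻¹ • v) ∈ {x : ℝ | ∃ u ∈ Ω, F u = 1 ∧ ω u = x} :=
    ⟨_, hu, hFu, rfl⟩
  have hle : ω ((F v)⁻¹ • v) ≤ S := le_csSup hbdd hmem
  have hSle : S ≤ 0 := csSup_le ⟨_, hmem⟩ (by rintro x ⟨u, hu, -, rfl⟩; exact (hω u hu).le)
  have hsq : S ^ 2 ≤ (ω ((F v)⁻¹ • v)) ^ 2 := by
    have := (hω _ hu)
    nlinarith
  have hωu : ω ((F v)⁻¹ • v) = (F v)⁻¹ * ω v := by simp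
  rw [hLstar, hL v hv]
  rw [hωu] at hsq
  have h2 : S ^ 2 * (F v) ^ 2 ≤ (ω v) ^ 2 := by
    have h := mul_le_mul_of_nonneg_right hsq (sq_nonneg (F v))
    calc S ^ 2 * (F v) ^ 2 ≤ ((F v)⁻¹ * ω v) ^ 2 * (F v) ^ 2 := h
      _ = (ω v) ^ 2 := by field_simp
  nlinarith
end

section
/- Fix an integer n ≥ 1, real numbers N ∉ {0, n} and ε, and set c := (1/n)·(1 − ε²·(N−n)/N). Let B, R : ℝ → Matrix (Fin n) (Fin n) ℝ with B differentiable and B′(t) + B(t)·B(t) + R(t) = 0 for all t, and let ψ : ℝ → ℝ be twice differentiable. Define e(t) := exp((2(1−ε)/n)·ψ(t)), θ_ε(t) := e(t)·(trace(B(t)) − ψ′(t)), B_ε(t) := e(t) • (B(t) − (ψ′(t)/n) • 1), σ_ε(t) := B_ε(t) − (θ_ε(t)/n) • 1, θ_ε*(t) := e(t)·θ_ε′(t), ψ*(t) := e(t)·ψ′(t), and Ric_N(t) := e(t)²·(trace(R(t)) + ψ″(t) − ψ′(t)²/(N−n)). Then for all t ∈ ℝ: θ_ε*(t) + c·θ_ε(t)²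 + (N(N−n)/n)·(ε·θ_ε(t)/N + ψ*(t)/(N−n))² + trace(σ_ε(t)·σ_ε(t)) + Ric_N(t) = 0. -/
/-!
Tracing the Riccati equation gives `(tr B)' = -tr B² - tr R`, and `tr B²` splits into the isotropic
part `(tr B)² / n` and the squared shear `tr σ_ε² / e²`. Differentiating `θ_ε = e (tr B - ψ')` and
dividing by `e²` leaves an identity in `u = tr B - ψ'` and `y = ψ'` alone, in which the
`ε`-dependent terms complete a square.
-/

attribute [local instance] Matrix.normedAddCommGroup Matrix.normedSpace

open Matrix

section TracelessPart

variable {ι 𝕜 : Type*} [Fintype ι] [DecidableEq ι] [Field 𝕜]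

def tracelessPart (A : Matrix ι ι 𝕜) : Matrix ι ι 𝕜 :=
  A - (A.trace / Fintype.card ι) • 1

theorem trace_tracelessPart_mul_self (A : Matrix ι ι 𝕜) (hι : (Fintype.card ι : 𝕜) ≠ 0) :
    (tracelessPart A * tracelessPart A).trace = (A * A).trace - A.trace ^ 2 / Fintype.card ι := by
  simp only [tracelessPart, sub_mul, mul_sub, Matrix.smul_mul, Matrix.mul_smul, Matrix.one_mul,
    Matrix.mul_one, smul_smul, trace_sub, trace_smul, trace_one, smul_eq_mul]
  field_simp
  ring

end TracelessPart

theorem hasDerivAt_trace {ι : Type*} [Fintype ι] {B : ℝ → Matrix ι ι ℝ} {B' : Matrix ι ι ℝ}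
    {t : ℝ} (hB : HasDerivAt B B' t) : HasDerivAt (fun s ↦ (B s).trace) B'.trace t :=
  (traceLinearMap ι ℝ ℝ).toContinuousLinearMap.hasFDerivAt.comp_hasDerivAt t hB

theorem hasDerivAt_trace_of_riccati {ι : Type*} [Fintype ι] {B R : ℝ → Matrix ι ι ℝ} {t : ℝ}
    (hB : DifferentiableAt ℝ B t) (hRiccati : deriv B t + B t * B t + R t = 0) :
    HasDerivAt (fun s ↦ (B s).trace) (-(B t * B t).trace - (R t).trace) t := by
  have hB' : deriv B t = -(B t * B t) - R t := by
    rw [← sub_eq_zero, ← hRiccati]; abel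
  rw [← trace_neg, ← trace_sub, ← hB']
  exact hasDerivAt_trace hB.hasDerivAt

theorem hasDerivAt_exp_const_mul_mul {ψ f : ℝ → ℝ} {ψ' f' t : ℝ} (k : ℝ) (hψ : HasDerivAt ψ ψ' t)
    (hf : HasDerivAt f f' t) :
    HasDerivAt (fun s ↦ Real.exp (k * ψ s) * f s) (Real.exp (k * ψ t) * (k * ψ' * f t + f')) t :=
  ((hψ.const_mul k).exp.fun_mul hf).congr_deriv (by ring)

/-- The main identity divided by `e²`, with `u = θ_ε / e` and `y = ψ'`. -/
theorem raychaudhuri_completing_square (n N ε u y : ℝ) (hn : n ≠ 0) (hN : N ≠ 0)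
    (hNn : N - n ≠ 0) :
    2 * (1 - ε) / n * y * u + 1 / n * (1 - ε ^ 2 * (N - n) / N) * u ^ 2
      + N * (N - n) / n * (ε * u / N + y / (N - n)) ^ 2
      = (u + y) ^ 2 / n + y ^ 2 / (N - n) := by
  field_simp
  ring

/-- The timelike weighted Raychaudhuri equation with ε-range (equation (6.3)):
for a differentiable solution `B` of the matrix Riccati equation `B' + B² + R = 0`
and a twice differentiable weight `ψ`, the weighted expansion scalar `θ_ε`, the
weighted shear `σ_ε`, and the weighted Ricci curvature `Ric_N` satisfy
`θ_ε* + c θ_ε² + (N(N−n)/n)(ε θ_ε/N + ψ*/(N−n))² + trace(σ_ε²) + Ric_N = 0`. -/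
theorem weighted_raychaudhuri
    (n : ℕ) (hn : 1 ≤ n) (N ε : ℝ) (hN0 : N ≠ 0) (hNn : N ≠ (n : ℝ))
    (c : ℝ) (hc : c = (1 / n) * (1 - ε ^ 2 * (N - n) / N))
    (B R : ℝ → Matrix (Fin n) (Fin n) ℝ)
    (hB : Differentiable ℝ B)
    (hRiccati : ∀ t : ℝ, deriv B t + B t * B t + R t = 0)
    (ψ : ℝ → ℝ) (hψ : Differentiable ℝ ψ) (hψ' : Differentiable ℝ (deriv ψ))
    (e : ℝ → ℝ) (he : ∀ t, e t = Real.exp ((2 * (1 - ε) / n) * ψ t))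
    (θε : ℝ → ℝ) (hθε : ∀ t, θε t = e t * ((B t).trace - deriv ψ t))
    (Bε : ℝ → Matrix (Fin n) (Fin n) ℝ)
    (hBε : ∀ t, Bε t = e t • (B t - (deriv ψ t / n) • (1 : Matrix (Fin n) (Fin n) ℝ)))
    (σε : ℝ → Matrix (Fin n) (Fin n) ℝ)
    (hσε : ∀ t, σε t = Bε t - (θε t / n) • (1 : Matrix (Fin n) (Fin n) ℝ))
    (θεstar : ℝ → ℝ) (hθεstar : ∀ t, θεstar t = e t * deriv θε t)
    (ψstar : ℝ → ℝ) (hψstar : ∀ t, ψstar t = e t * deriv ψ t)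
    (RicN : ℝ → ℝ)
    (hRicN : ∀ t, RicN t =
      (e t) ^ 2 * ((R t).trace + deriv (deriv ψ) t - (deriv ψ t) ^ 2 / (N - n))) :
    ∀ t : ℝ,
      θεstar t + c * (θε t) ^ 2
        + (N * (N - n) / n) * (ε * θε t / N + ψstar t / (N - n)) ^ 2
        + (σε t * σε t).trace + RicN t = 0 := by
  intro t
  have hn0 : (n : ℝ) ≠ 0 := Nat.cast_ne_zero.mpr (by omega)
  have hNn0 : N - n ≠ 0 := sub_ne_zero.mpr hNn
  have hθ' : deriv θε t = e t * (2 * (1 - ε) / n * deriv ψ t * ((B t).trace - deriv ψ t)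
      + (-(B t * B t).trace - (R t).trace - deriv (deriv ψ) t)) := by
    have hθfun : θε = fun s ↦ Real.exp (2 * (1 - ε) / n * ψ s) * ((B s).trace - deriv ψ s) :=
      funext fun s ↦ by rw [hθε, he]
    rw [hθfun, he]
    exact (hasDerivAt_exp_const_mul_mul _ (hψ t).hasDerivAt
      ((hasDerivAt_trace_of_riccati (hB t) (hRiccati t)).sub (hψ' t).hasDerivAt)).deriv
  have hσ : σε t = e t • tracelessPart (B t) := by
    rw [hσε, hBε, hθε, tracelessPart, Fintype.card_fin]
    module
  have hσσ : (σε t * σε t).trace = e t ^ 2 * ((B t * B t).trace - (B t).trace ^ 2 / n) := by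
    rw [hσ, smul_mul_smul_comm, trace_smul,
      trace_tracelessPart_mul_self _ (by rwa [Fintype.card_fin]), Fintype.card_fin, smul_eq_mul,
      sq, sq]
  rw [hθεstar, hθ', hθε, hψstar, hRicN, hσσ, hc]
  linear_combination (e t) ^ 2 * raychaudhuri_completing_square n N ε
    ((B t).trace - deriv ψ t) (deriv ψ t) hn0 hN0 hNn0
end

section
/- Let c > 0 and let w : ℝ → ℝ be continuous with w > 0, and suppose ∫₀ᵗ w(s) ds → +∞ as t → +∞ and ∫₀ᵗ w(s) ds → −∞ as t → −∞. If θ : ℝ → ℝ is differentiable and satisfies θ′(t) + c·w(t)·θ(t)² ≤ 0 for all t ∈ ℝ, then θ ≡ 0. -/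
/-!
Along the Riccati inequality `θ' ≤ -c w θ²` the function `θ` is nonincreasing, and wherever
`θ ≠ 0` one has `(1/θ)' = -θ'/θ² ≥ c w`, i.e. `1/θ - c W` is nondecreasing for a primitive `W`
of `w`. If `θ(a) < 0`, then `θ < 0` on `[a, ∞)`, so `c (W t - W a) ≤ 1/θ(t) - 1/θ(a) < -1/θ(a)`
there: `W` would be bounded above, contradicting `W → +∞`. Reversing time turns `θ(a) > 0`
into the same situation, now contradicting `W → -∞` at `-∞`.
-/

open Filter

section Riccati

variable {c : ℝ} {w W θ : ℝ → ℝ}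

theorem antitone_of_riccati (hc : 0 ≤ c) (hw : ∀ t, 0 ≤ w t) (hθ : Differentiable ℝ θ)
    (hriccati : ∀ t, deriv θ t + c * w t * θ t ^ 2 ≤ 0) : Antitone θ :=
  antitone_of_deriv_nonpos hθ fun t => by
    nlinarith [hriccati t, mul_nonneg (mul_nonneg hc (hw t)) (sq_nonneg (θ t))]

theorem monotoneOn_inv_sub_of_riccati {s : Set ℝ} (hs : Convex ℝ s)
    (hW : ∀ t, HasDerivAt W (w t) t) (hθ : Differentiable ℝ θ) (hne : ∀ t ∈ s, θ t ≠ 0)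
    (hriccati : ∀ t, deriv θ t + c * w t * θ t ^ 2 ≤ 0) :
    MonotoneOn (fun t => (θ t)⁻¹ - c * W t) s := by
  have hderiv : ∀ t ∈ s,
      HasDerivAt (fun t => (θ t)⁻¹ - c * W t) (-deriv θ t / θ t ^ 2 - c * w t) t :=
    fun t ht => ((hθ t).hasDerivAt.inv (hne t ht)).sub ((hW t).const_mul c)
  refine monotoneOn_of_hasDerivWithinAt_nonneg hs
    (fun t ht => (hderiv t ht).continuousAt.continuousWithinAt)
    (fun t ht => (hderiv t (interior_subset ht)).hasDerivWithinAt) fun t ht => ?_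
  have hθt := hne t (interior_subset ht)
  calc (0 : ℝ) ≤ -(deriv θ t + c * w t * θ t ^ 2) / θ t ^ 2 :=
        div_nonneg (neg_nonneg.mpr (hriccati t)) (sq_nonneg _)
    _ = -deriv θ t / θ t ^ 2 - c * w t := by field_simp; ring

theorem nonneg_of_riccati_of_tendsto_atTop (hc : 0 < c) (hw : ∀ t, 0 ≤ w t)
    (hW : ∀ t, HasDerivAt W (w t) t) (hW_top : Tendsto W atTop atTop)
    (hθ : Differentiable ℝ θ) (hriccati : ∀ t, deriv θ t + c * w t * θ t ^ 2 ≤ 0) (a : ℝ) :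
    0 ≤ θ a := by
  by_contra! hθa
  have hneg : ∀ t ∈ Set.Ici a, θ t < 0 := fun t ht =>
    (antitone_of_riccati hc.le hw hθ hriccati ht).trans_lt hθa
  have hmono := monotoneOn_inv_sub_of_riccati (convex_Ici a) hW hθ
    (fun t ht => (hneg t ht).ne) hriccati
  obtain ⟨t, hat, hbig⟩ := ((eventually_ge_atTop a).and
    ((hW_top.const_mul_atTop hc).eventually_gt_atTop (c * W a - (θ a)⁻¹))).exists
  have hle := hmono Set.self_mem_Ici hat hat
  have hinv : (θ t)⁻¹ < 0 := inv_lt_zero.mpr (hneg t hat)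
  dsimp only at hle
  linarith

theorem nonpos_of_riccati_of_tendsto_atBot (hc : 0 < c) (hw : ∀ t, 0 ≤ w t)
    (hW : ∀ t, HasDerivAt W (w t) t) (hW_bot : Tendsto W atBot atBot)
    (hθ : Differentiable ℝ θ) (hriccati : ∀ t, deriv θ t + c * w t * θ t ^ 2 ≤ 0) (a : ℝ) :
    θ a ≤ 0 := by
  have hreversed := nonneg_of_riccati_of_tendsto_atTop (θ := fun t => -θ (-t))
    (W := fun t => -W (-t)) hc (fun t => hw (-t))
    (fun t => by simpa using ((hW (-t)).comp t (hasDerivAt_neg t)).fun_neg)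
    (tendsto_neg_atBot_atTop.comp (hW_bot.comp tendsto_neg_atTop_atBot))
    (fun t => ((hθ (-t)).comp t differentiableAt_id.neg).neg)
    (fun t => by simpa [deriv_comp_neg] using hriccati (-t)) (-a)
  simpa using hreversed

end Riccati

/-- Global rigidity for the weighted Riccati inequality: if `w` is continuous and
positive with `∫₀ᵗ w → ±∞` as `t → ±∞`, `c > 0`, and a differentiable `θ : ℝ → ℝ`
satisfies `θ' + c·w·θ² ≤ 0` everywhere, then `θ ≡ 0`. -/
theorem weighted_riccati_rigidity
    (c : ℝ) (hc : 0 < c)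
    (w : ℝ → ℝ) (hw_cont : Continuous w) (hw_pos : ∀ t, 0 < w t)
    (h_top : Filter.Tendsto (fun t : ℝ => ∫ s in (0 : ℝ)..t, w s) Filter.atTop Filter.atTop)
    (h_bot : Filter.Tendsto (fun t : ℝ => ∫ s in (0 : ℝ)..t, w s) Filter.atBot Filter.atBot)
    (θ : ℝ → ℝ) (hθ : Differentiable ℝ θ)
    (hriccati : ∀ t : ℝ, deriv θ t + c * w t * (θ t) ^ 2 ≤ 0) :
    ∀ t : ℝ, θ t = 0 := by
  have hW : ∀ t, HasDerivAt (fun t => ∫ s in (0 : ℝ)..t, w s) (w t) t := fun t =>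
    (hw_cont.integral_hasStrictDerivAt 0 t).hasDerivAt
  have hw : ∀ t, 0 ≤ w t := fun t => (hw_pos t).le
  exact fun t => le_antisymm
    (nonpos_of_riccati_of_tendsto_atBot hc hw hW h_bot hθ hriccati t)
    (nonneg_of_riccati_of_tendsto_atTop hc hw hW h_top hθ hriccati t)
end

section
/- Let n ≥ 1 and let B : ℝ → Matrix (Fin n) (Fin n) ℝ be differentiable with B(t) symmetric (B(t)ᵀ = B(t)) for every t, and suppose B′(t) + B(t)·B(t) = 0 for all t ∈ ℝ. Then B(t) = 0 for all t ∈ ℝ. -/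
attribute [local instance] Matrix.normedAddCommGroup Matrix.normedSpace

open Matrix

/-!
The trace `θ` of a symmetric solution satisfies `θ' = -tr(BᵀB)`, and Cauchy–Schwarz on the
diagonal gives `θ² ≤ n tr(BᵀB)`, so `n θ' ≤ -θ²`. A globally defined solution of this scalar
Riccati inequality vanishes: a negative value would blow up in finite forward time, a positive one
in finite backward time. Hence `tr(BᵀB) = -θ' = 0`, i.e. `B = 0`.
-/

section ScalarRiccati

variable {u u' : ℝ → ℝ} {c : ℝ}

/-- If `u t₀ < 0`, then `u` stays negative and `c / u - t` is nondecreasing on `[t₀, ∞)` while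
`c / u < 0`, which fails at `t = t₀ - c / u t₀`. -/
theorem nonneg_of_mul_deriv_le_neg_sq (hc : 0 ≤ c) (hu : ∀ t, HasDerivAt u (u' t) t)
    (h : ∀ t, c * u' t ≤ -u t ^ 2) (t₀ : ℝ) : 0 ≤ u t₀ := by
  by_contra! hneg
  obtain rfl | hc := hc.eq_or_lt
  · nlinarith [h t₀]
  have hanti : Antitone u := antitone_of_hasDerivAt_nonpos hu fun t => by
    show u' t ≤ 0
    nlinarith [h t, sq_nonneg (u t)]
  have hneg_after : ∀ t ∈ Set.Ici t₀, u t < 0 := fun t ht => (hanti ht).trans_lt hneg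
  have hderiv : ∀ t ∈ Set.Ici t₀,
      HasDerivAt (fun s => c * (u s)⁻¹ - s) (c * (-u' t / u t ^ 2) - 1) t := fun t ht =>
    (((hu t).inv (hneg_after t ht).ne).const_mul c).sub (hasDerivAt_id t)
  have hmono : MonotoneOn (fun s => c * (u s)⁻¹ - s) (Set.Ici t₀) := by
    refine monotoneOn_of_hasDerivWithinAt_nonneg (convex_Ici t₀)
      (fun t ht => (hderiv t ht).continuousAt.continuousWithinAt)
      (fun t ht => (hderiv t (interior_subset ht)).hasDerivWithinAt) fun t ht => ?_
    have hut := hneg_after t (interior_subset ht)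
    rw [mul_div_assoc', sub_nonneg, le_div_iff₀ (sq_pos_of_neg hut)]
    linarith [h t]
  have hquot_neg : ∀ t ∈ Set.Ici t₀, c * (u t)⁻¹ < 0 := fun t ht =>
    mul_neg_of_pos_of_neg hc (inv_lt_zero.mpr (hneg_after t ht))
  set t₁ := t₀ - c * (u t₀)⁻¹
  have ht₀₁ : t₀ ≤ t₁ := by linarith [hquot_neg t₀ Set.self_mem_Ici]
  have hle : c * (u t₀)⁻¹ - t₀ ≤ c * (u t₁)⁻¹ - t₁ := hmono Set.self_mem_Ici ht₀₁ ht₀₁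
  linarith [hquot_neg t₁ ht₀₁]

theorem eq_zero_of_mul_deriv_le_neg_sq (hc : 0 ≤ c) (hu : ∀ t, HasDerivAt u (u' t) t)
    (h : ∀ t, c * u' t ≤ -u t ^ 2) (t : ℝ) : u t = 0 := by
  refine le_antisymm ?_ (nonneg_of_mul_deriv_le_neg_sq hc hu h t)
  have hv : ∀ s, HasDerivAt (fun s => -u (-s)) (u' (-s)) s := fun s => by
    simpa using ((hu (-s)).comp s (hasDerivAt_neg s)).fun_neg
  simpa using nonneg_of_mul_deriv_le_neg_sq hc hv (fun s => by simpa using h (-s)) (-t)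

end ScalarRiccati

theorem HasDerivAt.matrix_trace {𝕜 m : Type*} [NontriviallyNormedField 𝕜] [CompleteSpace 𝕜]
    [Fintype m] {A : 𝕜 → Matrix m m 𝕜} {A' : Matrix m m 𝕜} {t : 𝕜} (h : HasDerivAt A A' t) :
    HasDerivAt (fun s => (A s).trace) A'.trace t :=
  (traceLinearMap m 𝕜 𝕜).toContinuousLinearMap.hasFDerivAt.comp_hasDerivAt t h

theorem Matrix.sq_trace_le_card_mul_trace_transpose_mul_self {R m : Type*} [Field R]
    [LinearOrder R] [IsStrictOrderedRing R] [Fintype m] (A : Matrix m m R) :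
    A.trace ^ 2 ≤ Fintype.card m * (Aᵀ * A).trace :=
  calc A.trace ^ 2 ≤ Fintype.card m * ∑ i, A i i ^ 2 := sq_sum_le_card_mul_sum_sq
    _ ≤ Fintype.card m * (Aᵀ * A).trace := by
      gcongr
      refine Finset.sum_le_sum fun i _ => ?_
      rw [diag_apply, mul_apply, sq]
      exact Finset.single_le_sum (f := fun j => A j i * A j i) (fun j _ => mul_self_nonneg _)
        (Finset.mem_univ i)

theorem matrix_riccati_rigidity_general
    (n : ℕ)
    (B : ℝ → Matrix (Fin n) (Fin n) ℝ)
    (hBdiff : Differentiable ℝ B)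
    (hsymm : ∀ t : ℝ, (B t)ᵀ = B t)
    (hriccati : ∀ t : ℝ, deriv B t + B t * B t = 0) :
    ∀ t : ℝ, B t = 0 := by
  have htrace : ∀ t, HasDerivAt (fun s => (B s).trace) (-((B t)ᵀ * B t).trace) t := fun t => by
    rw [hsymm, ← trace_neg, ← eq_neg_of_add_eq_zero_left (hriccati t)]
    exact (hBdiff t).hasDerivAt.matrix_trace
  have htrace_zero : ∀ t, (B t).trace = 0 :=
    eq_zero_of_mul_deriv_le_neg_sq (Nat.cast_nonneg n) htrace fun t => by
      simpa using sq_trace_le_card_mul_trace_transpose_mul_self (B t)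
  intro t
  rw [← trace_conjTranspose_mul_self_eq_zero_iff, conjTranspose_eq_transpose_of_trivial,
    ← neg_eq_zero]
  exact (htrace t).unique (by simpa [funext htrace_zero] using hasDerivAt_const t (0 : ℝ))

/-- Matrix Riccati rigidity on the real line: a globally defined differentiable
symmetric solution of `B' + B² = 0` vanishes identically. -/
theorem matrix_riccati_rigidity
    (n : ℕ) (hn : 1 ≤ n)
    (B : ℝ → Matrix (Fin n) (Fin n) ℝ)
    (hBdiff : Differentiable ℝ B)
    (hsymm : ∀ t : ℝ, (B t)ᵀ = B t)
    (hriccati : ∀ t : ℝ, deriv B t + B t * B t = 0) :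
    ∀ t : ℝ, B t = 0 :=
  matrix_riccati_rigidity_general n B hBdiff hsymm hriccati
end

section
/- Let n ≥ 1 be an integer, R ∈ ℝ with 0 < R ≤ 1/3, and x⁰, x¹, …, xⁿ ∈ ℝ. Assume (x⁰)² < R², Σ_{i=1}^{n} (xⁱ)² < R², Σ_{i=1}^{n} (xⁱ)² > (1+2R)·(x⁰)², and (1/R)·Σ_{i=1}^{n-1} (xⁱ)² − xⁿ − (x⁰)² ≤ 0. Then Σ_{α=0}^{n} (xᵅ)² − 6R·xⁿ < 0. -/
open Finset

/-- Claim in Step 2 of the proof of Proposition 6.2: any point of the coordinate tube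
lying in `𝒜 = {Σᵢ(xⁱ)² > (1+2R)(x⁰)²}` with `φ(x) = (1/R)Σ_{i<n}(xⁱ)² − xⁿ − (x⁰)² ≤ 0`
lies in `B = {Σ_α(x^α)² − 6Rxⁿ < 0}`. -/
theorem fermi_claim
    (n : ℕ) (hn : 1 ≤ n) (R : ℝ) (hR0 : 0 < R) (hR : R ≤ 1 / 3)
    (x : ℕ → ℝ)
    (h0 : (x 0) ^ 2 < R ^ 2)
    (h1 : ∑ i ∈ Icc 1 n, (x i) ^ 2 < R ^ 2)
    (hA : ∑ i ∈ Icc 1 n, (x i) ^ 2 > (1 + 2 * R) * (x 0) ^ 2)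
    (hφ : (1 / R) * ∑ i ∈ Icc 1 (n - 1), (x i) ^ 2 - x n - (x 0) ^ 2 ≤ 0) :
    ∑ α ∈ Icc 0 n, (x α) ^ 2 - 6 * R * x n < 0 := by
  set T := ∑ i ∈ Icc 1 (n - 1), (x i) ^ 2 with hTdef
  have hS : ∑ i ∈ Icc 1 n, (x i) ^ 2 = T + x n ^ 2 := by
    have hn1 : n - 1 + 1 = n := by omega
    have hmem : n ∉ Icc 1 (n - 1) := by simp; omega
    have hins : Icc 1 n = insert n (Icc 1 (n - 1)) := by
      ext k; simp [Finset.mem_insert]; omega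
    rw [hins, Finset.sum_insert hmem, hTdef]; ring
  have hS0 : ∑ α ∈ Icc 0 n, (x α) ^ 2 = x 0 ^ 2 + ∑ i ∈ Icc 1 n, (x i) ^ 2 := by
    have hmem : (0 : ℕ) ∉ Icc 1 n := by simp
    have hins : Icc 0 n = insert 0 (Icc 1 n) := by
      ext k; simp [Finset.mem_insert]; omega
    rw [hins, Finset.sum_insert hmem]
  have hT0 : 0 ≤ T := Finset.sum_nonneg fun i _ => sq_nonneg _
  have hTR : T ≤ R * x n + R * (x 0) ^ 2 := by
    have := mul_le_mul_of_nonneg_left hφ (le_of_lt hR0)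
    field_simp at this
    nlinarith
  have hxnR : x n < R := by nlinarith [hS, hT0]
  have hxnL : -R < x n := by nlinarith [hS, hT0]
  have hstar : (1 + R) * (x 0) ^ 2 < R * x n + x n ^ 2 := by nlinarith
  have hxnpos : 0 < x n := by nlinarith [sq_nonneg (x 0)]
  have hsq : x n ^ 2 < R * x n := by nlinarith
  rw [hS0, hS]
  nlinarith [sq_nonneg (x 0)]
end

section
/- Let I ⊆ ℝ be an open interval and u : I → ℝ continuous. Suppose that for every x ∈ I and every ε > 0 there exist δ > 0 with (x−δ, x+δ) ⊆ I and a function ρ : ℝ → ℝ that is twice continuously differentiable on (x−δ, x+δ) such that ρ(x) = u(x), ρ(y) ≥ u(y) for all y ∈ (x−δ, x+δ), and deriv (deriv ρ) y ≤ ε for all y ∈ (x−δ, x+δ). Then u is concave on I. -/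
/-! If `u` lay strictly below a chord over `[x, y]`, then `u` minus the chord plus a small
parabola `η (t - x) (y - t)` would attain an interior minimum at some `x₀`. Adding the same
perturbation to an upper support of `u` at `x₀` with second derivative at most `η` gives a
function with a local minimum at `x₀` and second derivative at most `-η < 0`, which the
second-derivative test forbids. -/

open Set Filter Topology

theorem IsLocalMin.deriv_deriv_nonneg {f : ℝ → ℝ} {x : ℝ} (hmin : IsLocalMin f x)
    (hf : ContinuousAt f x) : 0 ≤ deriv (deriv f) x := by
  by_contra! hneg
  have hmax : IsLocalMax f x := isLocalMax_of_deriv_deriv_neg hneg hmin.deriv_eq_zero hf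
  have hconst : f =ᶠ[𝓝 x] fun _ => f x :=
    (hmin.and hmax).mono fun y hy => le_antisymm hy.2 hy.1
  have hderiv : deriv f =ᶠ[𝓝 x] fun _ => 0 :=
    hconst.eventuallyEq_nhds.mono fun y hy => by rw [hy.deriv_eq, deriv_const]
  simp [hderiv.deriv_eq] at hneg

def HasUpperSupportDerivDerivLE (u : ℝ → ℝ) (x ε : ℝ) : Prop :=
  ∃ ρ : ℝ → ℝ, ρ x = u x ∧ (∀ᶠ y in 𝓝 x, u y ≤ ρ y) ∧ ContDiffAt ℝ 2 ρ x ∧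
    deriv (deriv ρ) x ≤ ε

theorem HasUpperSupportDerivDerivLE.not_isLocalMin_add {u q : ℝ → ℝ} {x ε : ℝ}
    (h : HasUpperSupportDerivDerivLE u x ε) (hq : ContDiffAt ℝ 2 q x)
    (hq2 : deriv (deriv q) x < -ε) : ¬IsLocalMin (u + q) x := by
  obtain ⟨ρ, hρx, hle, hρ, hρ2⟩ := h
  intro hmin
  have hρq_min : IsLocalMin (ρ + q) x := by
    filter_upwards [hmin, hle] with y hy hley
    simp only [Pi.add_apply] at hy ⊢
    linarith
  have hsum : deriv (deriv (ρ + q)) x = deriv (deriv ρ) x + deriv (deriv q) x := by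
    simpa [iteratedDeriv_succ] using iteratedDeriv_add hρ hq
  linarith [hρq_min.deriv_deriv_nonneg (hρ.continuousAt.add hq.continuousAt)]

theorem deriv_deriv_parabola (η s x y z : ℝ) :
    deriv (deriv fun t => η * ((t - x) * (y - t)) - s * (t - x)) z = -2 * η := by
  have hderiv : deriv (fun t => η * ((t - x) * (y - t)) - s * (t - x)) =
      fun t => η * ((y - t) - (t - x)) - s := by
    ext t
    have := ((((hasDerivAt_id' t).sub_const x).fun_mul ((hasDerivAt_id' t).const_sub y)).const_mul
      η).fun_sub (((hasDerivAt_id' t).sub_const x).const_mul s)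
    rw [this.deriv]
    ring
  have := ((((hasDerivAt_id' z).const_sub y).fun_sub ((hasDerivAt_id' z).sub_const x)).const_mul
    η).sub_const s
  rw [hderiv, this.deriv]
  ring

theorem mul_add_mul_le_of_hasUpperSupportDerivDerivLE {u : ℝ → ℝ} {x y : ℝ} (hxy : x < y)
    (hu : ContinuousOn u (Icc x y))
    (hsupp : ∀ z ∈ Ioo x y, ∀ ε > 0, HasUpperSupportDerivDerivLE u z ε)
    {a b : ℝ} (ha : 0 < a) (hb : 0 < b) (hab : a + b = 1) :
    a * u x + b * u y ≤ u (a * x + b * y) := by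
  by_contra! hlt
  set c := a * x + b * y
  set s := (u y - u x) / (y - x)
  set gap := a * u x + b * u y - u c
  -- small enough that the parabola lifts `u c` by only `a * b * gap < gap`
  set η := gap / (y - x) ^ 2
  set q : ℝ → ℝ := fun t => η * ((t - x) * (y - t)) - s * (t - x)
  set φ := u + q
  have hyx : 0 < y - x := sub_pos.2 hxy
  have hη : 0 < η := div_pos (sub_pos.2 hlt) (pow_pos hyx 2)
  have hcx : c - x = b * (y - x) := by linear_combination x * hab
  have hyc : y - c = a * (y - x) := by linear_combination (-y) * hab
  have hc : c ∈ Icc x y := ⟨by nlinarith, by nlinarith⟩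
  have hφx : φ x = u x := by simp [φ, q]
  have hφy : φ y = u x := by
    simp only [φ, Pi.add_apply, q, s, sub_self, mul_zero, zero_sub]
    field_simp
    ring
  have hφc : φ c < u x := by
    have hq : q c = a * b * gap - b * (u y - u x) := by
      simp only [q, s, hcx, hyc, η]
      field_simp
    have hφc_eq : φ c = u x - (1 - a * b) * gap := by
      simp only [φ, Pi.add_apply, hq, gap]
      linear_combination (u x) * hab
    have hab1 : a * b < 1 := by nlinarith
    rw [hφc_eq]
    linarith [mul_pos (sub_pos.2 hab1) (sub_pos.2 hlt)]
  have hendpoints : ∀ z ∈ Icc x y \ Ioo x y, φ c < φ z := by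
    rw [Icc_sdiff_Ioo_same hxy.le]
    rintro z (rfl | rfl) <;> linarith
  have hq : ContDiff ℝ 2 q := by fun_prop
  obtain ⟨x₀, hx₀, hmin⟩ := isCompact_Icc.exists_isLocalMin_mem_open Ioo_subset_Icc_self
    (hu.add hq.continuous.continuousOn) hc hendpoints isOpen_Ioo
  refine (hsupp x₀ hx₀ η hη).not_isLocalMin_add hq.contDiffAt ?_ hmin
  rw [show deriv (deriv q) x₀ = -2 * η from deriv_deriv_parabola η s x y x₀]
  linarith

theorem concave_of_upper_support_general
    (I : Set ℝ) (hIinterval : Convex ℝ I)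
    (u : ℝ → ℝ) (hu : ContinuousOn u I)
    (hsupp : ∀ x ∈ I, ∀ ε : ℝ, 0 < ε →
      ∃ δ : ℝ, 0 < δ ∧ Ioo (x - δ) (x + δ) ⊆ I ∧
        ∃ ρ : ℝ → ℝ, ContDiffOn ℝ 2 ρ (Ioo (x - δ) (x + δ)) ∧
          ρ x = u x ∧
          (∀ y ∈ Ioo (x - δ) (x + δ), ρ y ≥ u y) ∧
          (∀ y ∈ Ioo (x - δ) (x + δ), deriv (deriv ρ) y ≤ ε)) :
    ConcaveOn ℝ I u := by
  refine LinearOrder.concaveOn_of_lt hIinterval fun x hx y hy hxy a b ha hb hab => ?_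
  have hxyI : Icc x y ⊆ I := hIinterval.ordConnected.out hx hy
  simp only [smul_eq_mul]
  refine mul_add_mul_le_of_hasUpperSupportDerivDerivLE hxy (hu.mono hxyI)
    (fun z hz ε hε => ?_) ha hb hab
  obtain ⟨δ, hδ, -, ρ, hρ, hρz, hle, hρ2⟩ := hsupp z (hxyI (Ioo_subset_Icc_self hz)) ε hε
  have hnhds : Ioo (z - δ) (z + δ) ∈ 𝓝 z := Ioo_mem_nhds (by linarith) (by linarith)
  exact ⟨ρ, hρz, mem_of_superset hnhds hle, hρ.contDiffAt hnhds, hρ2 z (mem_of_mem_nhds hnhds)⟩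

/-- Concavity via upper support functions with almost nonpositive second derivative:
if a continuous function `u` on an open interval `I` admits, at every point and for
every `ε > 0`, a C² upper support function with second derivative at most `ε` on a
small interval around the point, then `u` is concave on `I`. -/
theorem concave_of_upper_support
    (I : Set ℝ) (hIopen : IsOpen I) (hIinterval : Convex ℝ I)
    (u : ℝ → ℝ) (hu : ContinuousOn u I)
    (hsupp : ∀ x ∈ I, ∀ ε : ℝ, 0 < ε →
      ∃ δ : ℝ, 0 < δ ∧ Ioo (x - δ) (x + δ) ⊆ I ∧
        ∃ ρ : ℝ → ℝ, ContDiffOn ℝ 2 ρ (Ioo (x - δ) (x + δ)) ∧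
          ρ x = u x ∧
          (∀ y ∈ Ioo (x - δ) (x + δ), ρ y ≥ u y) ∧
          (∀ y ∈ Ioo (x - δ) (x + δ), deriv (deriv ρ) y ≤ ε)) :
    ConcaveOn ℝ I u :=
  concave_of_upper_support_general I hIinterval u hu hsupp
end
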